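/- arXiv:2009.08142 — 3 statements merged into one kernel-verified Lean document; each statement's English description precedes it below -/
import Mathlib

section
/- Let Δ > 0 and p > 0. Let (I_k)_{k≥1} be an IID sequence of {0,1}-valued random variables on a probability space with P(I_1 = 1) = Δ/(Δ+p). Let (α_k)_{k≥1} be a sequence of positive reals with α_k/k → 0 as k → ∞. Define Î_k = Σ_{j=1}^k I_j and x_k = p·Î_k/(k + α_k − Î_k) for k ≥ 1. Then x_k → Δ almost surely as k → ∞. -/
/-!
A `{0,1}`-valued random variable is the indicator of the event where it equals `1`, so its law
is determined by the probability of that event. The `I_k` are therefore IID with mean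
`μ = Δ/(Δ+p)`, and the strong law of large numbers gives `Î_k/k → μ` almost surely. Dividing
numerator and denominator of `x_k` by `k` and using `α_k/k → 0` yields
`x_k → pμ/(1-μ) = Δ`.
-/

open MeasureTheory ProbabilityTheory Filter Topology

theorem eq_indicator_one_of_zero_or_one {Ω : Type*} {f : Ω → ℝ}
    (h01 : ∀ ω, f ω = 0 ∨ f ω = 1) : f = {ω | f ω = 1}.indicator 1 := by
  ext ω
  rcases h01 ω with h | h <;> simp [h]

theorem identDistrib_indicator_one {Ω Ω' : Type*} [MeasurableSpace Ω] [MeasurableSpace Ω']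
    {P : Measure Ω} {Q : Measure Ω'} [IsProbabilityMeasure P] [IsProbabilityMeasure Q]
    {A : Set Ω} {B : Set Ω'} (hA : MeasurableSet A) (hB : MeasurableSet B) (h : P A = Q B) :
    IdentDistrib (A.indicator (1 : Ω → ℝ)) (B.indicator 1) P Q where
  aemeasurable_fst := (measurable_one.indicator hA).aemeasurable
  aemeasurable_snd := (measurable_one.indicator hB).aemeasurable
  map_eq := by
    classical
    ext s hs
    rw [Measure.map_apply (measurable_one.indicator hA) hs,
      Measure.map_apply (measurable_one.indicator hB) hs]
    simp only [Pi.one_def, Set.indicator_const_preimage_eq_union]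
    split_ifs <;> simp [measure_compl, hA, hB, h]

theorem identDistrib_of_zero_or_one {Ω Ω' : Type*} [MeasurableSpace Ω] [MeasurableSpace Ω']
    {P : Measure Ω} {Q : Measure Ω'} [IsProbabilityMeasure P] [IsProbabilityMeasure Q]
    {f : Ω → ℝ} {g : Ω' → ℝ} (hf : Measurable f) (hg : Measurable g)
    (hf01 : ∀ ω, f ω = 0 ∨ f ω = 1) (hg01 : ∀ ω, g ω = 0 ∨ g ω = 1)
    (h : P {ω | f ω = 1} = Q {ω | g ω = 1}) : IdentDistrib f g P Q := by
  rw [eq_indicator_one_of_zero_or_one hf01, eq_indicator_one_of_zero_or_one hg01]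
  exact identDistrib_indicator_one (hf (measurableSet_singleton 1))
    (hg (measurableSet_singleton 1)) h

theorem integral_eq_measureReal_of_zero_or_one {Ω : Type*} [MeasurableSpace Ω] {P : Measure Ω}
    {f : Ω → ℝ} (hf : Measurable f) (h01 : ∀ ω, f ω = 0 ∨ f ω = 1) :
    ∫ ω, f ω ∂P = P.real {ω | f ω = 1} := by
  conv_lhs => rw [eq_indicator_one_of_zero_or_one h01]
  exact integral_indicator_one (hf (measurableSet_singleton 1))

theorem tendsto_mul_div_add_sub {S α : ℕ → ℝ} {μ : ℝ} (p : ℝ)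
    (hS : Tendsto (fun k => S k / k) atTop (𝓝 μ))
    (hα : Tendsto (fun k => α k / k) atTop (𝓝 0)) (hμ : μ ≠ 1) :
    Tendsto (fun k => p * S k / (k + α k - S k)) atTop (𝓝 (p * μ / (1 - μ))) := by
  have hlim : Tendsto (fun k : ℕ => p * (S k / k) / (1 + α k / k - S k / k)) atTop
      (𝓝 (p * μ / (1 + 0 - μ))) :=
    (tendsto_const_nhds.mul hS).div ((tendsto_const_nhds.add hα).sub hS)
      (by simpa [sub_eq_zero] using hμ.symm)
  rw [add_zero] at hlim
  refine hlim.congr' ?_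
  filter_upwards [eventually_ne_atTop 0] with k hk
  rw [← div_div_div_cancel_right₀ (Nat.cast_ne_zero.mpr hk) (p * S k)]
  congr 1
  · ring
  · field_simp

/-- `I k` stands for the indicator `I_{k+1}` of the paper (so the IID family is indexed by `ℕ`),
hence `∑ j ∈ Finset.range k, I j = Σ_{j=1}^k I_j = Î_k`. -/
theorem lln_estimator_as_convergence_general
    {Ω : Type*} [MeasurableSpace Ω] (P : Measure Ω) [IsProbabilityMeasure P]
    (Δ p : ℝ) (hΔ : 0 < Δ) (hp : 0 < p)
    (I : ℕ → Ω → ℝ)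
    (hmeas : ∀ k, Measurable (I k))
    (h01 : ∀ k ω, I k ω = 0 ∨ I k ω = 1)
    (hindep : iIndepFun I P)
    (hP : ∀ k, P {ω | I k ω = 1} = ENNReal.ofReal (Δ / (Δ + p)))
    (α : ℕ → ℝ)
    (hα0 : Tendsto (fun k => α k / k) atTop (nhds 0))
    (x : ℕ → Ω → ℝ)
    (hx : ∀ k ω, 1 ≤ k →
      x k ω = p * (∑ j ∈ Finset.range k, I j ω) / (k + α k - ∑ j ∈ Finset.range k, I j ω)) :
    ∀ᵐ ω ∂P, Tendsto (fun k => x k ω) atTop (nhds Δ) := by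
  have hident (k : ℕ) : IdentDistrib (I k) (I 0) P P :=
    identDistrib_of_zero_or_one (hmeas k) (hmeas 0) (h01 k) (h01 0) (by rw [hP, hP])
  have hint : Integrable (I 0) P :=
    .of_mem_Icc 0 1 (hmeas 0).aemeasurable
      (.of_forall fun ω => by rcases h01 0 ω with h | h <;> simp [h])
  have hmean : P[I 0] = Δ / (Δ + p) := by
    rw [integral_eq_measureReal_of_zero_or_one (hmeas 0) (h01 0), measureReal_def, hP,
      ENNReal.toReal_ofReal (by positivity)]
  have hμ : Δ / (Δ + p) ≠ 1 := by
    rw [Ne, div_eq_one_iff_eq (by positivity)]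
    linarith
  have hlimit : p * (Δ / (Δ + p)) / (1 - Δ / (Δ + p)) = Δ := by
    have hΔp : Δ + p ≠ 0 := by positivity
    rw [one_sub_div hΔp, add_sub_cancel_left]
    field_simp
  filter_upwards [strong_law_ae_real I hint (fun i j hij => hindep.indepFun hij) hident]
    with ω hω
  rw [hmean] at hω
  rw [← hlimit]
  refine (tendsto_mul_div_add_sub p hω hα0 hμ).congr' ?_
  filter_upwards [eventually_ge_atTop 1] with k hk
  exact (hx k ω hk).symm

/-- **LLN estimator: almost sure convergence.**
`I k` stands for the indicator `I_{k+1}` of the paper (so the IID family is indexed by `ℕ`),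
hence `∑ j in Finset.range k, I j = Σ_{j=1}^k I_j` and `x k = p·Î_k/(k + α_k − Î_k)`. -/
theorem lln_estimator_as_convergence
    {Ω : Type*} [MeasurableSpace Ω] (P : Measure Ω) [IsProbabilityMeasure P]
    (Δ p : ℝ) (hΔ : 0 < Δ) (hp : 0 < p)
    (I : ℕ → Ω → ℝ)
    (hmeas : ∀ k, Measurable (I k))
    (h01 : ∀ k ω, I k ω = 0 ∨ I k ω = 1)
    (hindep : iIndepFun I P)
    (hP : ∀ k, P {ω | I k ω = 1} = ENNReal.ofReal (Δ / (Δ + p)))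
    (α : ℕ → ℝ) (hα : ∀ k, 0 < α k)
    (hα0 : Tendsto (fun k => α k / k) atTop (nhds 0))
    (x : ℕ → Ω → ℝ)
    (hx : ∀ k ω, 1 ≤ k →
      x k ω = p * (∑ j ∈ Finset.range k, I j ω) / (k + α k - ∑ j ∈ Finset.range k, I j ω)) :
    ∀ᵐ ω ∂P, Tendsto (fun k => x k ω) atTop (nhds Δ) :=
  lln_estimator_as_convergence_general P Δ p hΔ hp I hmeas h01 hindep hP α hα0 x hx
end

section
/- Let Δ > 0 and p > 0. Let (I_k)_{k≥1} be an IID sequence of {0,1}-valued random variables with P(I_1 = 1) = Δ/(Δ+p), let (α_k)_{k≥1} be positive reals with α_k/k → 0 and log(k/α_k)/k → 0 as k → ∞, and set x_k = p·Î_k/(k + α_k − Î_k) with Î_k = Σ_{j=1}^k I_j. Then E|x_k − Δ| = O(max{k^{−1/2}, α_k/k}); i.e., there exist C > 0 and K ≥ 1 such that for all k ≥ K, E|x_k − Δ| ≤ C·max{k^{−1/2}, α_k/k}. -/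
/-!
With `μ = Δ / (Δ + p)` one has `Δ = p μ / (1 - μ)` and
`x_k - Δ = p (Î_k - μ (k + α_k)) / ((1 - μ) (k + α_k - Î_k))`.
On the event `Î_k - kμ < k (1 - μ) / 2` the denominator is at least `k (1 - μ)² / 2`, so there
the error is at most a multiple of `(|Î_k - kμ| + α_k) / k`, whose mean is
`O(k^{-1/2} + α_k / k)` because `Var Î_k ≤ k / 4`. On the complementary event the crude bound
`|x_k - Δ| ≤ p k / α_k + Δ` is paid with probability at most `exp (-k (1 - μ)² / 2)`
(Hoeffding), and since `log (k / α_k) = o(k)` this contribution is `o(k^{-1/2})`.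
-/

open MeasureTheory ProbabilityTheory Filter Finset Real Topology

lemma abs_div_sub_le {p Δ k a s : ℝ} (hp : 0 ≤ p) (hΔ : 0 ≤ Δ) (ha : 0 < a)
    (hs0 : 0 ≤ s) (hsk : s ≤ k) :
    |p * s / (k + a - s) - Δ| ≤ p * k / a + Δ := by
  have hden : a ≤ k + a - s := by linarith
  have hx0 : 0 ≤ p * s / (k + a - s) := div_nonneg (by positivity) (by linarith)
  have hbound0 : 0 ≤ p * k / a := div_nonneg (mul_nonneg hp (hs0.trans hsk)) ha.le
  have hxle : p * s / (k + a - s) ≤ p * k / a := by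
    gcongr
    exact mul_nonneg hp (hs0.trans hsk)
  rw [abs_le]
  constructor <;> linarith

lemma abs_div_sub_div_le_of_sub_le {p μ k a s : ℝ} (hp : 0 ≤ p) (hμ0 : 0 ≤ μ) (hμ1 : μ < 1)
    (hk : 0 < k) (ha : 0 ≤ a) (hs : s - k * μ ≤ k * ((1 - μ) / 2)) :
    |p * s / (k + a - s) - p * μ / (1 - μ)| ≤ 2 * p / ((1 - μ) ^ 2 * k) * (|s - k * μ| + a) := by
  have h1μ : 0 < 1 - μ := by linarith
  have hden : k * (1 - μ) / 2 ≤ k + a - s := by linarith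
  have hden0 : 0 < k + a - s := lt_of_lt_of_le (by positivity) hden
  have hnum : |s - μ * (k + a)| ≤ |s - k * μ| + a := by
    calc |s - μ * (k + a)| = |(s - k * μ) - μ * a| := by ring_nf
      _ ≤ |s - k * μ| + |μ * a| := abs_sub _ _
      _ ≤ |s - k * μ| + a := by
          rw [abs_of_nonneg (mul_nonneg hμ0 ha)]
          nlinarith
  calc |p * s / (k + a - s) - p * μ / (1 - μ)|
      = p * |s - μ * (k + a)| / ((k + a - s) * (1 - μ)) := by
        rw [div_sub_div _ _ hden0.ne' h1μ.ne', abs_div, abs_of_pos (mul_pos hden0 h1μ),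
          show p * s * (1 - μ) - (k + a - s) * (p * μ)
            = p * (s - μ * (k + a)) by ring, abs_mul, abs_of_nonneg hp]
    _ ≤ p * (|s - k * μ| + a) / (k * (1 - μ) / 2 * (1 - μ)) := by gcongr
    _ = 2 * p / ((1 - μ) ^ 2 * k) * (|s - k * μ| + a) := by
        field_simp

lemma eventually_exp_neg_mul_mul_le_rpow_neg_half {c : ℝ} (hc : 0 < c) {f : ℕ → ℝ}
    (hf : ∀ᶠ k in atTop, 0 < f k) (hlog : Tendsto (fun k ↦ log (f k) / k) atTop (𝓝 0)) :
    ∀ᶠ k : ℕ in atTop, exp (-(c * k)) * f k ≤ (k : ℝ) ^ (-(1 : ℝ) / 2) := by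
  have hlogk : Tendsto (fun k : ℕ ↦ log k / k) atTop (𝓝 0) := by
    have := isLittleO_log_id_atTop.tendsto_div_nhds_zero.comp tendsto_natCast_atTop_atTop
    simpa [Function.comp_def] using this
  have hsum := hlog.add (hlogk.const_mul (1 / 2))
  rw [mul_zero, add_zero] at hsum
  filter_upwards [hsum.eventually (gt_mem_nhds hc), eventually_gt_atTop 0, hf] with k hlt hk hfk
  have hk' : (0 : ℝ) < k := Nat.cast_pos.2 hk
  have hlt' : log (f k) + 1 / 2 * log k < c * k := by
    have := mul_lt_mul_of_pos_right hlt hk'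
    field_simp at this
    linarith
  rw [rpow_def_of_pos hk', ← exp_log hfk, ← exp_add, exp_le_exp]
  linarith

lemma add_le_mul_max_rpow_neg_half {p μ Δ k a E : ℝ} (hp : 0 ≤ p) (hΔ : 0 ≤ Δ) (hμ1 : μ < 1)
    (hk : 0 < k) (ha : 0 < a) (hE : E * (k / a) ≤ k ^ (-(1 : ℝ) / 2))
    (hE₁ : E ≤ k ^ (-(1 : ℝ) / 2)) :
    2 * p / ((1 - μ) ^ 2 * k) * (√k / 2 + a) + E * (p * k / a + Δ)
      ≤ (3 * p / (1 - μ) ^ 2 + p + Δ) * max (k ^ (-(1 : ℝ) / 2)) (a / k) := by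
  have h1μ : 1 - μ ≠ 0 := by linarith
  have hsqrt : √k / k = k ^ (-(1 : ℝ) / 2) := by
    rw [sqrt_div_self', sqrt_eq_rpow, one_div, ← rpow_neg hk.le]
    norm_num
  calc 2 * p / ((1 - μ) ^ 2 * k) * (√k / 2 + a) + E * (p * k / a + Δ)
      = p / (1 - μ) ^ 2 * (√k / k) + 2 * p / (1 - μ) ^ 2 * (a / k) + p * (E * (k / a))
          + Δ * E := by
        field_simp
        ring
    _ ≤ p / (1 - μ) ^ 2 * max (k ^ (-(1 : ℝ) / 2)) (a / k)
          + 2 * p / (1 - μ) ^ 2 * max (k ^ (-(1 : ℝ) / 2)) (a / k)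
          + p * max (k ^ (-(1 : ℝ) / 2)) (a / k) + Δ * max (k ^ (-(1 : ℝ) / 2)) (a / k) := by
        rw [hsqrt]
        gcongr
        exacts [le_max_left _ _, le_max_right _ _, hE.trans (le_max_left _ _),
          hE₁.trans (le_max_left _ _)]
    _ = (3 * p / (1 - μ) ^ 2 + p + Δ) * max (k ^ (-(1 : ℝ) / 2)) (a / k) := by ring

namespace ProbabilityTheory

variable {Ω : Type*} [MeasurableSpace Ω] {P : Measure Ω}

lemma integral_eq_measureReal_of_forall_eq_zero_or_one {Y : Ω → ℝ} (hY : Measurable Y)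
    (h01 : ∀ ω, Y ω = 0 ∨ Y ω = 1) : P[Y] = P.real {ω | Y ω = 1} := by
  have hY_eq : Y = Set.indicator {ω | Y ω = 1} 1 := by
    ext ω
    rcases h01 ω with h | h <;> simp [h]
  conv_lhs => rw [hY_eq]
  rw [integral_indicator_one (measurableSet_eq_fun hY measurable_const)]

variable [IsProbabilityMeasure P]

lemma integral_abs_sub_integral_le_sqrt_variance {X : Ω → ℝ} (hX : MemLp X 2 P) :
    ∫ ω, |X ω - P[X]| ∂P ≤ √Var[X; P] := by
  have hdev : MemLp (fun ω ↦ |X ω - P[X]|) 2 P := (hX.sub (memLp_const (P[X] : ℝ))).abs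
  have hvar := variance_nonneg (fun ω ↦ |X ω - P[X]|) P
  rw [variance_eq_sub hdev] at hvar
  rw [variance_eq_integral hX.aestronglyMeasurable.aemeasurable]
  refine Real.le_sqrt_of_sq_le ?_
  simpa only [Pi.pow_apply, sq_abs, sub_nonneg] using hvar

variable {X : ℕ → Ω → ℝ}

lemma iIndepFun.integral_abs_sum_range_sub_le (hindep : iIndepFun X P)
    (hX : ∀ i, AEMeasurable (X i) P) (hX01 : ∀ i, ∀ᵐ ω ∂P, X i ω ∈ Set.Icc 0 1) (n : ℕ) :
    ∫ ω, |∑ i ∈ range n, X i ω - ∑ i ∈ range n, P[X i]| ∂P ≤ √n / 2 := by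
  have hL2 : ∀ i ∈ range n, MemLp (X i) 2 P :=
    fun i _ ↦ memLp_of_bounded (hX01 i) (hX i).aestronglyMeasurable 2
  have hvar : Var[∑ i ∈ range n, X i; P] ≤ n / 4 := by
    rw [IndepFun.variance_sum hL2 fun i _ j _ hij ↦ hindep.indepFun hij]
    calc ∑ i ∈ range n, Var[X i; P] ≤ ∑ _i ∈ range n, ((1 - 0) / 2 : ℝ) ^ 2 :=
          sum_le_sum fun i _ ↦ variance_le_sq_of_bounded (hX01 i) (hX i)
      _ = n / 4 := by rw [sum_const, card_range, nsmul_eq_mul]; ring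
  have hmean : P[∑ i ∈ range n, X i] = ∑ i ∈ range n, P[X i] := by
    simp only [Finset.sum_apply]
    exact integral_finsetSum _ fun i hi ↦ (hL2 i hi).integrable one_le_two
  calc ∫ ω, |∑ i ∈ range n, X i ω - ∑ i ∈ range n, P[X i]| ∂P
      = ∫ ω, |(∑ i ∈ range n, X i) ω - P[∑ i ∈ range n, X i]| ∂P := by
        rw [hmean]; simp only [Finset.sum_apply]
    _ ≤ √Var[∑ i ∈ range n, X i; P] :=
        integral_abs_sub_integral_le_sqrt_variance (memLp_finsetSum' _ hL2)
    _ ≤ √(n / 4) := Real.sqrt_le_sqrt hvar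
    _ = √n / 2 := by rw [Real.sqrt_div' _ (by norm_num : (0:ℝ) ≤ 4)]; norm_num

lemma iIndepFun.measureReal_sum_range_sub_ge_le (hindep : iIndepFun X P)
    (hX : ∀ i, AEMeasurable (X i) P) (hX01 : ∀ i, ∀ᵐ ω ∂P, X i ω ∈ Set.Icc 0 1) (n : ℕ)
    {t : ℝ} (ht : 0 ≤ t) :
    P.real {ω | n * t ≤ ∑ i ∈ range n, X i ω - ∑ i ∈ range n, P[X i]} ≤ exp (-(2 * t ^ 2 * n)) := by
  have hcentered : iIndepFun (fun i ω ↦ X i ω - P[X i]) P := by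
    exact hindep.comp (fun (i : ℕ) (x : ℝ) ↦ x - P[X i]) fun _ ↦ measurable_id.sub_const _
  have hoeffding := HasSubgaussianMGF.measure_sum_range_ge_le_of_iIndepFun hcentered (n := n)
    (fun i _ ↦ hasSubgaussianMGF_of_mem_Icc (hX i) (hX01 i)) (mul_nonneg n.cast_nonneg ht)
  simp only [sum_sub_distrib] at hoeffding
  refine hoeffding.trans_eq (congrArg exp ?_)
  rcases n.eq_zero_or_pos with rfl | hn
  · simp
  · have : (n : ℝ) ≠ 0 := by positivity
    norm_num
    field_simp
    ring

lemma integral_abs_div_sub_div_le {S : Ω → ℝ} (hS : Measurable S) {p μ k a m q : ℝ}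
    (hp : 0 ≤ p) (hμ0 : 0 ≤ μ) (hμ1 : μ < 1) (hk : 0 < k) (ha : 0 < a)
    (hS0 : ∀ ω, 0 ≤ S ω) (hSk : ∀ ω, S ω ≤ k) (hm : ∫ ω, |S ω - k * μ| ∂P ≤ m)
    (hq : P.real {ω | k * ((1 - μ) / 2) ≤ S ω - k * μ} ≤ q) :
    ∫ ω, |p * S ω / (k + a - S ω) - p * μ / (1 - μ)| ∂P
      ≤ 2 * p / ((1 - μ) ^ 2 * k) * (m + a) + q * (p * k / a + p * μ / (1 - μ)) := by
  set B := {ω | k * ((1 - μ) / 2) ≤ S ω - k * μ}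
  have hB : MeasurableSet B := measurableSet_le measurable_const (hS.sub measurable_const)
  have h1μ : 0 < 1 - μ := by linarith
  set A := 2 * p / ((1 - μ) ^ 2 * k)
  set R := p * k / a + p * μ / (1 - μ)
  have hR : 0 ≤ R := by positivity
  have hbound : ∀ ω, |p * S ω / (k + a - S ω) - p * μ / (1 - μ)|
      ≤ A * (|S ω - k * μ| + a) + B.indicator (fun _ ↦ R) ω := by
    intro ω
    by_cases hω : ω ∈ B
    · rw [Set.indicator_of_mem hω]
      have hcrude := abs_div_sub_le hp (by positivity : 0 ≤ p * μ / (1 - μ)) ha (hS0 ω) (hSk ω)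
      have : 0 ≤ A * (|S ω - k * μ| + a) := by positivity
      linarith
    · rw [Set.indicator_of_notMem hω, add_zero]
      exact abs_div_sub_div_le_of_sub_le hp hμ0 hμ1 hk ha.le (not_le.1 hω).le
  have hdev : Integrable (fun ω ↦ |S ω - k * μ|) P :=
    ((Integrable.of_mem_Icc 0 k hS.aemeasurable (ae_of_all _ fun ω ↦ ⟨hS0 ω, hSk ω⟩)).sub
      (integrable_const _)).abs
  have hA_int : Integrable (fun ω ↦ A * (|S ω - k * μ| + a)) P :=
    (hdev.add (integrable_const a)).const_mul A
  have hR_int : Integrable (B.indicator fun _ ↦ R) P := (integrable_const R).indicator hB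
  calc ∫ ω, |p * S ω / (k + a - S ω) - p * μ / (1 - μ)| ∂P
      ≤ ∫ ω, A * (|S ω - k * μ| + a) + B.indicator (fun _ ↦ R) ω ∂P :=
        integral_mono_of_nonneg (ae_of_all _ fun _ ↦ abs_nonneg _) (hA_int.add hR_int)
          (ae_of_all _ hbound)
    _ = A * (∫ ω, |S ω - k * μ| ∂P + a) + P.real B * R := by
        rw [integral_add hA_int hR_int, integral_const_mul, integral_add hdev (integrable_const a),
          integral_const, integral_indicator_const R hB]
        simp
    _ ≤ A * (m + a) + q * R := by gcongr

lemma iIndepFun.integral_abs_div_sum_range_sub_le (hindep : iIndepFun X P)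
    (hX : ∀ i, Measurable (X i)) (hX01 : ∀ i ω, X i ω ∈ Set.Icc 0 1) {μ : ℝ}
    (hmean : ∀ i, P[X i] = μ) (hμ1 : μ < 1) {p a : ℝ} (hp : 0 ≤ p) (ha : 0 < a) {k : ℕ}
    (hk : 0 < k) :
    ∫ ω, |p * (∑ i ∈ range k, X i ω) / (k + a - ∑ i ∈ range k, X i ω) - p * μ / (1 - μ)| ∂P
      ≤ 2 * p / ((1 - μ) ^ 2 * k) * (√k / 2 + a)
        + exp (-(2 * ((1 - μ) / 2) ^ 2 * k)) * (p * k / a + p * μ / (1 - μ)) := by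
  have hμ0 : 0 ≤ μ := hmean 0 ▸ integral_nonneg fun ω ↦ (hX01 0 ω).1
  have hsum_mean : ∑ i ∈ range k, P[X i] = k * μ := by simp [hmean]
  have hX' : ∀ i, AEMeasurable (X i) P := fun i ↦ (hX i).aemeasurable
  have hX01' : ∀ i, ∀ᵐ ω ∂P, X i ω ∈ Set.Icc 0 1 := fun i ↦ ae_of_all _ (hX01 i)
  exact integral_abs_div_sub_div_le (Finset.measurable_sum _ fun i _ ↦ hX i) hp hμ0 hμ1
    (Nat.cast_pos.2 hk) ha (fun ω ↦ sum_nonneg fun i _ ↦ (hX01 i ω).1)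
    (fun ω ↦ (sum_le_sum fun i _ ↦ (hX01 i ω).2).trans_eq (by simp))
    (hsum_mean ▸ hindep.integral_abs_sum_range_sub_le hX' hX01' k)
    (hsum_mean ▸ hindep.measureReal_sum_range_sub_ge_le hX' hX01' k (by linarith))

end ProbabilityTheory

theorem lln_estimator_rate_general
    {Ω : Type*} [MeasurableSpace Ω] (P : Measure Ω) [IsProbabilityMeasure P]
    (Δ p : ℝ) (hΔ : 0 < Δ) (hp : 0 < p)
    (I : ℕ → Ω → ℝ)
    (hmeas : ∀ k, Measurable (I k))
    (h01 : ∀ k ω, I k ω = 0 ∨ I k ω = 1)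
    (hindep : iIndepFun I P)
    (hP : ∀ k, P {ω | I k ω = 1} = ENNReal.ofReal (Δ / (Δ + p)))
    (α : ℕ → ℝ) (hα : ∀ k, 0 < α k)
    (hαlog : Tendsto (fun k => Real.log (k / α k) / k) atTop (nhds 0))
    (x : ℕ → Ω → ℝ)
    (hx : ∀ k ω, 1 ≤ k →
      x k ω = p * (∑ j ∈ Finset.range k, I j ω) / (k + α k - ∑ j ∈ Finset.range k, I j ω)) :
    ∃ C > 0, ∃ K : ℕ, 1 ≤ K ∧ ∀ k, K ≤ k →
      ∫ ω, |x k ω - Δ| ∂P ≤ C * max ((k : ℝ) ^ (-(1 : ℝ) / 2)) (α k / k) := by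
  set μ := Δ / (Δ + p) with hμ
  have hμ0 : 0 ≤ μ := by positivity
  have hμ1 : μ < 1 := (div_lt_one (by positivity)).2 (by linarith)
  have hΔμ : Δ = p * μ / (1 - μ) := by
    rw [eq_div_iff (by linarith), hμ]
    field_simp
    ring
  have hmean (j : ℕ) : P[I j] = μ := by
    rw [integral_eq_measureReal_of_forall_eq_zero_or_one (hmeas j) (h01 j), measureReal_def, hP,
      ENNReal.toReal_ofReal hμ0]
  have hI01 (j : ℕ) (ω : Ω) : I j ω ∈ Set.Icc (0 : ℝ) 1 := by
    rcases h01 j ω with h | h <;> simp [h]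
  have h1μ : 0 < 1 - μ := by linarith
  have hc : 0 < 2 * ((1 - μ) / 2) ^ 2 := by positivity
  obtain ⟨K, hK⟩ := eventually_atTop.1 <|
    (eventually_exp_neg_mul_mul_le_rpow_neg_half hc
      (eventually_gt_atTop 0 |>.mono fun k hk ↦ div_pos (Nat.cast_pos.2 hk) (hα k)) hαlog).and
    (eventually_exp_neg_mul_mul_le_rpow_neg_half hc (f := fun _ ↦ 1) (.of_forall fun _ ↦ one_pos)
      (by simp))
  refine ⟨3 * p / (1 - μ) ^ 2 + p + Δ, by positivity, max K 1, le_max_right _ _, fun k hk ↦ ?_⟩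
  obtain ⟨hdecay, hdecay₁⟩ := hK k (le_of_max_le_left hk)
  have hk1 : 1 ≤ k := le_of_max_le_right hk
  calc ∫ ω, |x k ω - Δ| ∂P
      = ∫ ω, |p * (∑ j ∈ range k, I j ω) / (k + α k - ∑ j ∈ range k, I j ω) - Δ| ∂P :=
        integral_congr_ae (ae_of_all _ fun ω ↦ congrArg (fun y ↦ |y - Δ|) (hx k ω hk1))
    _ ≤ _ := hΔμ ▸ hindep.integral_abs_div_sum_range_sub_le hmeas hI01 hmean hμ1 hp.le (hα k) hk1
    _ ≤ _ := add_le_mul_max_rpow_neg_half hp.le hΔ.le hμ1 (by positivity) (hα k)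
        (by simpa using hdecay) (by simpa using hdecay₁)

/-- **LLN estimator: convergence rate in expected error.**
`I k` stands for the indicator `I_{k+1}` of the paper (so the IID family is indexed by `ℕ`),
hence `∑ j in Finset.range k, I j = Σ_{j=1}^k I_j` and `x k = p·Î_k/(k + α_k − Î_k)`.
The conclusion is `E|x_k − Δ| ≤ C·max{k^{−1/2}, α_k/k}` for all `k ≥ K`. -/
theorem lln_estimator_rate
    {Ω : Type*} [MeasurableSpace Ω] (P : Measure Ω) [IsProbabilityMeasure P]
    (Δ p : ℝ) (hΔ : 0 < Δ) (hp : 0 < p)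
    (I : ℕ → Ω → ℝ)
    (hmeas : ∀ k, Measurable (I k))
    (h01 : ∀ k ω, I k ω = 0 ∨ I k ω = 1)
    (hindep : iIndepFun I P)
    (hP : ∀ k, P {ω | I k ω = 1} = ENNReal.ofReal (Δ / (Δ + p)))
    (α : ℕ → ℝ) (hα : ∀ k, 0 < α k)
    (hα0 : Tendsto (fun k => α k / k) atTop (nhds 0))
    (hαlog : Tendsto (fun k => Real.log (k / α k) / k) atTop (nhds 0))
    (x : ℕ → Ω → ℝ)
    (hx : ∀ k ω, 1 ≤ k →
      x k ω = p * (∑ j ∈ Finset.range k, I j ω) / (k + α k - ∑ j ∈ Finset.range k, I j ω)) :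
    ∃ C > 0, ∃ K : ℕ, 1 ≤ K ∧ ∀ k, K ≤ k →
      ∫ ω, |x k ω - Δ| ∂P ≤ C * max ((k : ℝ) ^ (-(1 : ℝ) / 2)) (α k / k) :=
  lln_estimator_rate_general P Δ p hΔ hp I hmeas h01 hindep hP α hα hαlog x hx
end

section
/- Let Δ > 0 and p > 0. Let (I_k)_{k≥1} be an IID sequence of {0,1}-valued random variables with P(I_1 = 1) = Δ/(Δ+p). Let (η_k)_{k≥0} be positive reals with Σ_{k≥0} η_k = ∞ and Σ_{k≥0} η_k² < ∞. Fix any y_0 ∈ ℝ and define recursively y_{k+1} = y_k + η_k·[I_{k+1}(y_k + p) − y_k] for k ≥ 0. Then y_k → Δ almost surely as k → ∞. -/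
/-!
With `μ = Δ / (Δ + p)`, `c = p / (Δ + p)`, `ξ k = I k - μ` and `e k = y k - Δ`, the recursion reads
`e (k+1) = (1 - c η k) e k + η k (e k + Δ + p) ξ k`: a contraction plus a noise term whose
coefficient is known at time `k` while `ξ k` is bounded, centred and independent of the past.
The noise is therefore orthogonal to everything known at time `k`, so `E (e k)²` obeys a
discrete Grönwall inequality and stays bounded; hence the noise coefficients are square
summable and the partial sums of the noise form an `L²`-bounded martingale, which converges
almost surely. Pathwise, a contraction `1 - c η k` with `∑ η k = ∞` driven by a
convergent series tends to zero.
-/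

open MeasureTheory ProbabilityTheory Filter Finset Topology

section Deterministic

variable {a : ℕ → ℝ}

theorem tendsto_prod_Ico_one_sub_of_not_summable (ha0 : ∀ n, 0 ≤ a n) (hsum : ¬ Summable a)
    {K : ℕ} (ha1 : ∀ n ≥ K, a n ≤ 1) :
    Tendsto (fun n => ∏ i ∈ Ico K n, (1 - a i)) atTop (𝓝 0) := by
  have hsum_Ico : Tendsto (fun n => ∑ i ∈ Ico K n, a i) atTop atTop := by
    have := (not_summable_iff_tendsto_nat_atTop_of_nonneg ha0).1 hsum
    refine (tendsto_atTop_add_const_right _ (-∑ i ∈ range K, a i) this).congr' ?_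
    filter_upwards [eventually_ge_atTop K] with n hn
    rw [sum_Ico_eq_sub _ hn, sub_eq_add_neg]
  refine squeeze_zero (fun n => prod_nonneg fun i hi => sub_nonneg.2 (ha1 i (mem_Ico.1 hi).1))
    (fun n => ?_) (Real.tendsto_exp_atBot.comp (tendsto_neg_atTop_atBot.comp hsum_Ico))
  calc ∏ i ∈ Ico K n, (1 - a i)
      ≤ ∏ i ∈ Ico K n, Real.exp (-a i) :=
        prod_le_prod (fun i hi => sub_nonneg.2 (ha1 i (mem_Ico.1 hi).1))
          fun i _ => by linarith [Real.add_one_le_exp (-a i)]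
    _ = Real.exp (-∑ i ∈ Ico K n, a i) := by rw [← Real.exp_sum, sum_neg_distrib]

theorem tendsto_zero_of_eq_one_sub_mul_add_mul (ha0 : ∀ n, 0 ≤ a n) (hsum : ¬ Summable a)
    (ha1 : ∀ᶠ n in atTop, a n ≤ 1) {t w : ℕ → ℝ} (ht : Tendsto t atTop (𝓝 0))
    (hw : ∀ n, w (n + 1) = (1 - a n) * w n + a n * t n) :
    Tendsto w atTop (𝓝 0) := by
  refine Metric.tendsto_atTop.2 fun ε hε => ?_
  obtain ⟨K, hK⟩ :=
    (ha1.and (ht.eventually (Metric.ball_mem_nhds 0 (half_pos hε)))).exists_forall_of_atTop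
  have hcontract : ∀ n ≥ K, |w (n + 1)| - ε / 2 ≤ (1 - a n) * (|w n| - ε / 2) := by
    intro n hn
    obtain ⟨ha1n, htn⟩ := hK n hn
    rw [Real.dist_eq, sub_zero] at htn
    calc |w (n + 1)| - ε / 2 ≤ (1 - a n) * |w n| + a n * |t n| - ε / 2 := by
          rw [hw n]
          refine sub_le_sub_right ((abs_add_le _ _).trans_eq ?_) _
          rw [abs_mul, abs_mul, abs_of_nonneg (sub_nonneg.2 ha1n), abs_of_nonneg (ha0 n)]
      _ ≤ (1 - a n) * (|w n| - ε / 2) := by nlinarith [ha0 n]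
  have hbound : ∀ n ≥ K, |w n| - ε / 2 ≤ (|w K| - ε / 2) * ∏ i ∈ Ico K n, (1 - a i) := by
    intro n hn
    simpa using discrete_gronwall_prod_general (u := fun n => |w n| - ε / 2) (b := 0)
      (by simpa using hcontract) (fun n hn => sub_nonneg.2 (hK n hn).1) hn
  have hprod :=
    (tendsto_prod_Ico_one_sub_of_not_summable ha0 hsum fun n hn => (hK n hn).1).const_mul |w K|
  rw [mul_zero] at hprod
  obtain ⟨N, hN⟩ := ((eventually_ge_atTop K).and
    (hprod.eventually (eventually_lt_nhds (half_pos hε)))).exists_forall_of_atTop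
  refine ⟨N, fun n hn => ?_⟩
  obtain ⟨hKn, hsmall⟩ := hN n hn
  have hP0 : 0 ≤ ∏ i ∈ Ico K n, (1 - a i) :=
    prod_nonneg fun i hi => sub_nonneg.2 (hK i (mem_Ico.1 hi).1).1
  rw [Real.dist_eq, sub_zero]
  nlinarith [hbound n hKn]

theorem tendsto_zero_of_eq_one_sub_mul_add (ha0 : ∀ n, 0 ≤ a n) (hsum : ¬ Summable a)
    (ha1 : ∀ᶠ n in atTop, a n ≤ 1) {d e : ℕ → ℝ} {S : ℝ}
    (hd : Tendsto (fun n => ∑ k ∈ range n, d k) atTop (𝓝 S))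
    (he : ∀ n, e (n + 1) = (1 - a n) * e n + d n) :
    Tendsto e atTop (𝓝 0) := by
  -- Adding the tail `t n` of the series turns the forcing term `d n` into `a n * t n`.
  set t : ℕ → ℝ := fun n => S - ∑ k ∈ range n, d k
  have ht : Tendsto t atTop (𝓝 0) := by simpa using hd.const_sub S
  have hw := tendsto_zero_of_eq_one_sub_mul_add_mul ha0 hsum ha1 ht (w := e + t) fun n => by
    simp only [Pi.add_apply, t, sum_range_succ, he n]
    ring
  simpa using hw.sub ht

end Deterministic

section Noise

variable {Ω : Type*} {m0 : MeasurableSpace Ω} {P : Measure Ω}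

theorem integral_mul_eq_zero_of_indep {m : MeasurableSpace Ω} {F ξ : Ω → ℝ} (hm : m ≤ m0)
    (hF : StronglyMeasurable[m] F) (hξ : Measurable[m0] ξ)
    (hind : Indep (MeasurableSpace.comap ξ inferInstance) m P) (hξ0 : ∫ ω, ξ ω ∂P = 0) :
    ∫ ω, F ω * ξ ω ∂P = 0 := by
  have hFξ : IndepFun F ξ P :=
    (IndepFun_iff_Indep _ _ _).2 (indep_of_indep_of_le_left hind.symm hF.measurable.comap_le)
  rw [hFξ.integral_fun_mul_eq_mul_integral ((hF.mono hm).aestronglyMeasurable)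
    hξ.aestronglyMeasurable, hξ0, mul_zero]

theorem integral_eq_measureReal_of_eq_zero_or_one {f : Ω → ℝ} (hf : Measurable f)
    (h01 : ∀ ω, f ω = 0 ∨ f ω = 1) :
    ∫ ω, f ω ∂P = P.real {ω | f ω = 1} := by
  calc ∫ ω, f ω ∂P = ∫ ω, {ω | f ω = 1}.indicator 1 ω ∂P :=
        integral_congr_ae (ae_of_all _ fun ω => by rcases h01 ω with h | h <;> simp [h])
    _ = P.real {ω | f ω = 1} := integral_indicator_one (hf (measurableSet_singleton 1))

-- `σ(u j : j < n)`: unlike `Filtration.natural`, the present time `n` is excluded.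
def pastFiltration {β : Type*} [MeasurableSpace β] (u : ℕ → Ω → β)
    (hu : ∀ n, Measurable (u n)) : Filtration ℕ m0 where
  seq n := ⨆ j < n, MeasurableSpace.comap (u j) inferInstance
  mono' _ _ hnm := biSup_mono fun _ hj => lt_of_lt_of_le hj hnm
  le' _ := iSup₂_le fun j _ => (hu j).comap_le

structure IsBoundedInnovation (ℱ : Filtration ℕ m0) (ξ : ℕ → Ω → ℝ) (P : Measure Ω) :
    Prop where
  stronglyMeasurable : ∀ n, StronglyMeasurable[ℱ (n + 1)] (ξ n)
  abs_le_one : ∀ n ω, |ξ n ω| ≤ 1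
  integral_eq_zero : ∀ n, ∫ ω, ξ n ω ∂P = 0
  indep : ∀ n, Indep (MeasurableSpace.comap (ξ n) inferInstance) (ℱ n) P

theorem eLpNorm_one_le_ofReal_one_add_integral_sq [IsProbabilityMeasure P] {f : Ω → ℝ}
    (hf : MemLp f 2 P) : eLpNorm f 1 P ≤ ENNReal.ofReal (1 + ∫ ω, f ω ^ 2 ∂P) := by
  rw [eLpNorm_one_eq_lintegral_enorm,
    ← ofReal_integral_norm_eq_lintegral_enorm (hf.integrable one_le_two)]
  refine ENNReal.ofReal_le_ofReal ?_
  calc ∫ ω, ‖f ω‖ ∂P ≤ ∫ ω, (1 + f ω ^ 2) ∂P :=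
        integral_mono (hf.integrable one_le_two).norm ((integrable_const 1).add hf.integrable_sq)
          fun ω => by nlinarith [Real.norm_eq_abs (f ω), sq_abs (f ω), sq_nonneg (|f ω| - 1)]
    _ = 1 + ∫ ω, f ω ^ 2 ∂P := by
        rw [integral_add (integrable_const 1) hf.integrable_sq, integral_const, probReal_univ,
          one_smul]

theorem integral_mul_add_const_sq_le [IsProbabilityMeasure P] (a r : ℝ) {f : Ω → ℝ}
    (hf : MemLp f 2 P) :
    ∫ ω, (a * (f ω + r)) ^ 2 ∂P ≤ a ^ 2 * (2 * ∫ ω, f ω ^ 2 ∂P + 2 * r ^ 2) := by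
  simp_rw [mul_pow]
  rw [integral_const_mul]
  refine mul_le_mul_of_nonneg_left ?_ (sq_nonneg _)
  calc ∫ ω, (f ω + r) ^ 2 ∂P ≤ ∫ ω, (2 * f ω ^ 2 + 2 * r ^ 2) ∂P :=
        integral_mono (hf.add (memLp_const r)).integrable_sq
          ((hf.integrable_sq.const_mul 2).add (integrable_const _))
          fun ω => by nlinarith [sq_nonneg (f ω - r)]
    _ = 2 * ∫ ω, f ω ^ 2 ∂P + 2 * r ^ 2 := by
        rw [integral_add (hf.integrable_sq.const_mul 2) (integrable_const _),
          integral_const_mul, integral_const, probReal_univ, one_smul]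

theorem ProbabilityTheory.iIndepFun.isBoundedInnovation {ξ : ℕ → Ω → ℝ}
    (hind : iIndepFun ξ P) (hm : ∀ n, Measurable (ξ n)) (h1 : ∀ n ω, |ξ n ω| ≤ 1)
    (h0 : ∀ n, ∫ ω, ξ n ω ∂P = 0) :
    IsBoundedInnovation (pastFiltration ξ hm) ξ P where
  stronglyMeasurable n := (Measurable.of_comap_le
    (le_iSup₂ (f := fun j (_ : j < n + 1) => MeasurableSpace.comap (ξ j) inferInstance) n
      n.lt_succ_self)).stronglyMeasurable
  abs_le_one := h1
  integral_eq_zero := h0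
  indep n := by
    have := indep_iSup_of_disjoint (fun i => (hm i).comap_le)
      ((iIndepFun_iff_iIndep _ _ _).1 hind) (S := {n}) (T := Set.Iio n) (by simp)
    simpa [pastFiltration] using this

namespace IsBoundedInnovation

variable {ℱ : Filtration ℕ m0} {ξ : ℕ → Ω → ℝ}

theorem measurable (hξ : IsBoundedInnovation ℱ ξ P) (n : ℕ) : Measurable (ξ n) :=
  ((hξ.stronglyMeasurable n).mono (ℱ.le _)).measurable

theorem memLp_top (hξ : IsBoundedInnovation ℱ ξ P) (n : ℕ) : MemLp (ξ n) ⊤ P :=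
  memLp_top_of_bound (hξ.measurable n).aestronglyMeasurable 1
    (ae_of_all _ fun ω => (Real.norm_eq_abs _).trans_le (hξ.abs_le_one n ω))

theorem integral_sq_add_mul_le (hξ : IsBoundedInnovation ℱ ξ P) {n : ℕ} {a F : Ω → ℝ}
    (ha : StronglyMeasurable[ℱ n] a) (hF : StronglyMeasurable[ℱ n] F)
    (ha2 : MemLp a 2 P) (hF2 : MemLp F 2 P) :
    ∫ ω, (a ω + F ω * ξ n ω) ^ 2 ∂P ≤ ∫ ω, a ω ^ 2 ∂P + ∫ ω, F ω ^ 2 ∂P := by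
  have hFξ : MemLp (fun ω => F ω * ξ n ω) 2 P := (hξ.memLp_top n).mul' hF2
  have hcross : ∫ ω, a ω * (F ω * ξ n ω) ∂P = 0 := by
    simp_rw [← mul_assoc]
    exact integral_mul_eq_zero_of_indep (ℱ.le n) (ha.mul hF) (hξ.measurable n) (hξ.indep n)
      (hξ.integral_eq_zero n)
  have hnoise : ∫ ω, (F ω * ξ n ω) ^ 2 ∂P ≤ ∫ ω, F ω ^ 2 ∂P := by
    refine integral_mono hFξ.integrable_sq hF2.integrable_sq fun ω => ?_
    have hξ2 : ξ n ω ^ 2 ≤ 1 := (sq_le_one_iff_abs_le_one _).2 (hξ.abs_le_one n ω)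
    calc (F ω * ξ n ω) ^ 2 = F ω ^ 2 * ξ n ω ^ 2 := mul_pow _ _ _
      _ ≤ F ω ^ 2 := mul_le_of_le_one_right (sq_nonneg _) hξ2
  have hexpand : ∫ ω, (a ω + F ω * ξ n ω) ^ 2 ∂P = ∫ ω, a ω ^ 2 ∂P
      + 2 * ∫ ω, a ω * (F ω * ξ n ω) ∂P + ∫ ω, (F ω * ξ n ω) ^ 2 ∂P := by
    have hmul : Integrable (fun ω => 2 * (a ω * (F ω * ξ n ω))) P :=
      (ha2.integrable_mul hFξ).const_mul 2
    have hsum : Integrable (fun ω => a ω ^ 2 + 2 * (a ω * (F ω * ξ n ω))) P :=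
      ha2.integrable_sq.add hmul
    rw [integral_congr_ae (ae_of_all _ fun ω => by ring :
      (fun ω => (a ω + F ω * ξ n ω) ^ 2) =ᵐ[P]
        fun ω => a ω ^ 2 + 2 * (a ω * (F ω * ξ n ω)) + (F ω * ξ n ω) ^ 2),
      integral_add hsum hFξ.integrable_sq, integral_add ha2.integrable_sq hmul,
      integral_const_mul]
  linarith

theorem stronglyMeasurable_sum_mul (hξ : IsBoundedInnovation ℱ ξ P) {F : ℕ → Ω → ℝ}
    (hF : ∀ n, StronglyMeasurable[ℱ n] (F n)) (n : ℕ) :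
    StronglyMeasurable[ℱ n] (fun ω => ∑ k ∈ range n, F k ω * ξ k ω) := by
  refine Finset.stronglyMeasurable_fun_sum _ fun k hk => ?_
  have hkn := mem_range.1 hk
  exact ((hF k).mono (ℱ.mono hkn.le)).mul ((hξ.stronglyMeasurable k).mono (ℱ.mono hkn))

theorem memLp_sum_mul (hξ : IsBoundedInnovation ℱ ξ P) {F : ℕ → Ω → ℝ}
    (hF2 : ∀ n, MemLp (F n) 2 P) (n : ℕ) :
    MemLp (fun ω => ∑ k ∈ range n, F k ω * ξ k ω) 2 P :=
  memLp_finsetSum _ fun k _ => (hξ.memLp_top k).mul' (hF2 k)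

theorem condExp_mul_ae_eq_zero (hξ : IsBoundedInnovation ℱ ξ P) [IsFiniteMeasure P] {n : ℕ}
    {F : Ω → ℝ} (hF : StronglyMeasurable[ℱ n] F) (hF1 : Integrable F P) :
    P[F * ξ n | ℱ n] =ᵐ[P] 0 := by
  have hξ_indep : P[ξ n | ℱ n] =ᵐ[P] fun _ => ∫ ω, ξ n ω ∂P :=
    condExp_indep_eq (hξ.measurable n).comap_le (ℱ.le n)
      (comap_measurable (ξ n)).stronglyMeasurable (hξ.indep n)
  filter_upwards [condExp_mul_of_stronglyMeasurable_left hF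
    (hF1.mul_of_top_left (hξ.memLp_top n)) ((hξ.memLp_top n).integrable le_top), hξ_indep]
    with ω hpull hmean
  rw [hpull, Pi.mul_apply, hmean, hξ.integral_eq_zero n, mul_zero, Pi.zero_apply]

theorem martingale_sum_mul (hξ : IsBoundedInnovation ℱ ξ P) [IsFiniteMeasure P]
    {F : ℕ → Ω → ℝ} (hF : ∀ n, StronglyMeasurable[ℱ n] (F n))
    (hF1 : ∀ n, Integrable (F n) P) :
    Martingale (fun n ω => ∑ k ∈ range n, F k ω * ξ k ω) ℱ P := by
  set S : ℕ → Ω → ℝ := fun n ω => ∑ k ∈ range n, F k ω * ξ k ω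
  have hint : ∀ k, Integrable (F k * ξ k) P :=
    fun k => (hF1 k).mul_of_top_left (hξ.memLp_top k)
  have hSint : ∀ n, Integrable (S n) P := fun n => integrable_finsetSum _ fun k _ => hint k
  have hadapted : StronglyAdapted ℱ S := hξ.stronglyMeasurable_sum_mul hF
  refine martingale_nat hadapted hSint fun n => ?_
  have hsucc : S (n + 1) = S n + F n * ξ n := by
    ext ω
    simp only [S, sum_range_succ, Pi.add_apply, Pi.mul_apply]
  rw [hsucc]
  filter_upwards [condExp_add (hSint n) (hint n) (ℱ n),
    hξ.condExp_mul_ae_eq_zero (hF n) (hF1 n)] with ω hadd hzero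
  rw [hadd, Pi.add_apply, hzero, condExp_of_stronglyMeasurable (ℱ.le n) (hadapted n) (hSint n),
    Pi.zero_apply, add_zero]

theorem integral_sq_sum_mul_le (hξ : IsBoundedInnovation ℱ ξ P) {F : ℕ → Ω → ℝ}
    (hF : ∀ n, StronglyMeasurable[ℱ n] (F n)) (hF2 : ∀ n, MemLp (F n) 2 P) (n : ℕ) :
    ∫ ω, (∑ k ∈ range n, F k ω * ξ k ω) ^ 2 ∂P ≤ ∑ k ∈ range n, ∫ ω, F k ω ^ 2 ∂P := by
  induction n with
  | zero => simp
  | succ n ih =>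
    simp only [sum_range_succ]
    linarith [hξ.integral_sq_add_mul_le (hξ.stronglyMeasurable_sum_mul hF n) (hF n)
      (hξ.memLp_sum_mul hF2 n) (hF2 n)]

theorem ae_tendsto_sum_mul (hξ : IsBoundedInnovation ℱ ξ P) [IsProbabilityMeasure P]
    {F : ℕ → Ω → ℝ} (hF : ∀ n, StronglyMeasurable[ℱ n] (F n)) (hF2 : ∀ n, MemLp (F n) 2 P)
    (hsum : Summable fun n => ∫ ω, F n ω ^ 2 ∂P) :
    ∀ᵐ ω ∂P, ∃ L, Tendsto (fun n => ∑ k ∈ range n, F k ω * ξ k ω) atTop (𝓝 L) := by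
  refine (hξ.martingale_sum_mul hF fun n => (hF2 n).integrable one_le_two).submartingale
    |>.exists_ae_tendsto_of_bdd (R := (1 + ∑' n, ∫ ω, F n ω ^ 2 ∂P).toNNReal) fun n => ?_
  refine (eLpNorm_one_le_ofReal_one_add_integral_sq (hξ.memLp_sum_mul hF2 n)).trans
    (ENNReal.ofReal_le_ofReal ?_)
  have := hsum.sum_le_tsum (range n) fun k _ => integral_nonneg fun ω => sq_nonneg (F k ω)
  linarith [hξ.integral_sq_sum_mul_le hF hF2 n]

section Recursion

variable {c r : ℝ} {η : ℕ → ℝ} {e : ℕ → Ω → ℝ}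

theorem stronglyMeasurable_memLp_of_recursion (hξ : IsBoundedInnovation ℱ ξ P)
    [IsFiniteMeasure P] (he0 : StronglyMeasurable[ℱ 0] (e 0)) (he0' : MemLp (e 0) 2 P)
    (hrec : ∀ n ω, e (n + 1) ω = (1 - c * η n) * e n ω + η n * (e n ω + r) * ξ n ω) (n : ℕ) :
    StronglyMeasurable[ℱ n] (e n) ∧ MemLp (e n) 2 P := by
  induction n with
  | zero => exact ⟨he0, he0'⟩
  | succ n ih =>
    obtain ⟨hm, hL⟩ := ih
    have hm' : Measurable[ℱ (n + 1)] (e n) := (hm.mono (ℱ.mono n.le_succ)).measurable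
    have hξm : Measurable[ℱ (n + 1)] (ξ n) := (hξ.stronglyMeasurable n).measurable
    rw [show e (n + 1) = _ from funext (hrec n)]
    refine ⟨Measurable.stronglyMeasurable (by fun_prop), ?_⟩
    exact (hL.const_mul _).add
      ((hξ.memLp_top n).mul' ((hL.add (memLp_const r)).const_mul (η n)))

theorem exists_integral_sq_le_of_recursion (hξ : IsBoundedInnovation ℱ ξ P)
    [IsProbabilityMeasure P] (hc0 : 0 ≤ c) (hc1 : c ≤ 1) (hη : ∀ n, 0 ≤ η n)
    (hη2 : Summable fun n => η n ^ 2) (he : ∀ n, StronglyMeasurable[ℱ n] (e n))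
    (he2 : ∀ n, MemLp (e n) 2 P)
    (hrec : ∀ n ω, e (n + 1) ω = (1 - c * η n) * e n ω + η n * (e n ω + r) * ξ n ω) :
    ∃ M, ∀ n, ∫ ω, e n ω ^ 2 ∂P ≤ M := by
  set m : ℕ → ℝ := fun n => ∫ ω, e n ω ^ 2 ∂P
  have hm0 : ∀ n, 0 ≤ m n := fun n => integral_nonneg fun ω => sq_nonneg _
  have hstep : ∀ n, m (n + 1) ≤ (1 + 3 * η n ^ 2) * m n + 2 * r ^ 2 * η n ^ 2 := by
    intro n
    have hsq := hξ.integral_sq_add_mul_le (F := fun ω => η n * (e n ω + r))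
      ((he n).const_mul (1 - c * η n)) (((he n).add stronglyMeasurable_const).const_mul (η n))
      ((he2 n).const_mul (1 - c * η n)) (((he2 n).add (memLp_const r)).const_mul (η n))
    have hdrift : ∫ ω, ((1 - c * η n) * e n ω) ^ 2 ∂P = (1 - c * η n) ^ 2 * m n := by
      simp_rw [mul_pow]
      exact integral_const_mul _ _
    have hnoise := integral_mul_add_const_sq_le (η n) r (he2 n)
    have hcontr : (1 - c * η n) ^ 2 ≤ 1 + η n ^ 2 := by
      nlinarith [mul_nonneg hc0 (hη n), mul_le_mul_of_nonneg_right hc1 (hη n)]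
    simp only [m, hrec n]
    nlinarith [mul_le_mul_of_nonneg_right hcontr (hm0 n)]
  refine ⟨(m 0 + ∑' n, 2 * r ^ 2 * η n ^ 2) * Real.exp (∑' n, 3 * η n ^ 2), fun n => ?_⟩
  refine (discrete_gronwall (hm0 0) (fun n _ => hstep n) (fun n _ => by positivity)
    (fun n _ => by positivity) (Nat.zero_le n)).trans ?_
  rw [← Finset.range_eq_Ico]
  have hb_nonneg : 0 ≤ m 0 + ∑' n, 2 * r ^ 2 * η n ^ 2 :=
    add_nonneg (hm0 0) (tsum_nonneg fun n => by positivity)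
  gcongr
  · exact (hη2.mul_left _).sum_le_tsum _ fun n _ => by positivity
  · exact (hη2.mul_left _).sum_le_tsum _ fun n _ => by positivity

theorem ae_tendsto_zero_of_recursion (hξ : IsBoundedInnovation ℱ ξ P) [IsProbabilityMeasure P]
    (hc0 : 0 < c) (hc1 : c ≤ 1) (hη : ∀ n, 0 ≤ η n) (hη1 : ¬ Summable η)
    (hη2 : Summable fun n => η n ^ 2) (he0 : StronglyMeasurable[ℱ 0] (e 0))
    (he0' : MemLp (e 0) 2 P)
    (hrec : ∀ n ω, e (n + 1) ω = (1 - c * η n) * e n ω + η n * (e n ω + r) * ξ n ω) :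
    ∀ᵐ ω ∂P, Tendsto (fun n => e n ω) atTop (𝓝 0) := by
  have he := hξ.stronglyMeasurable_memLp_of_recursion he0 he0' hrec
  obtain ⟨M, hM⟩ := hξ.exists_integral_sq_le_of_recursion hc0.le hc1 hη hη2
    (fun n => (he n).1) (fun n => (he n).2) hrec
  have hnoise_sum : Summable fun n => ∫ ω, (η n * (e n ω + r)) ^ 2 ∂P :=
    (hη2.mul_right (2 * M + 2 * r ^ 2)).of_nonneg_of_le
      (fun n => integral_nonneg fun ω => sq_nonneg _)
      fun n => (integral_mul_add_const_sq_le (η n) r (he n).2).trans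
        (mul_le_mul_of_nonneg_left (by linarith [hM n]) (sq_nonneg _))
  have hcη : ¬ Summable fun n => c * η n := by rwa [summable_mul_left_iff hc0.ne']
  have hcη1 : ∀ᶠ n in atTop, c * η n ≤ 1 := by
    filter_upwards [hη2.tendsto_atTop_zero.eventually (eventually_le_nhds one_pos)] with n hn
    exact mul_le_one₀ hc1 (hη n) ((pow_le_one_iff_of_nonneg (hη n) two_ne_zero).1 hn)
  filter_upwards [hξ.ae_tendsto_sum_mul (F := fun n ω => η n * (e n ω + r))
    (fun n => ((he n).1.add stronglyMeasurable_const).const_mul (η n))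
    (fun n => ((he n).2.add (memLp_const r)).const_mul (η n)) hnoise_sum] with ω ⟨L, hL⟩
  exact tendsto_zero_of_eq_one_sub_mul_add (fun n => mul_nonneg hc0.le (hη n)) hcη hcη1 hL
    fun n => hrec n ω

end Recursion

end IsBoundedInnovation

end Noise

/-- **SA estimator: almost sure convergence.**
`I k` stands for the indicator `I_{k+1}` of the paper (so the IID family is indexed by `ℕ`),
and the SA recursion reads `y_{k+1} = y_k + η_k [I_{k+1}(y_k + p) − y_k]`. -/
theorem sa_estimator_as_convergence
    {Ω : Type*} [MeasurableSpace Ω] (P : Measure Ω) [IsProbabilityMeasure P]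
    (Δ p : ℝ) (hΔ : 0 < Δ) (hp : 0 < p)
    (I : ℕ → Ω → ℝ)
    (hmeas : ∀ k, Measurable (I k))
    (h01 : ∀ k ω, I k ω = 0 ∨ I k ω = 1)
    (hindep : iIndepFun I P)
    (hP : ∀ k, P {ω | I k ω = 1} = ENNReal.ofReal (Δ / (Δ + p)))
    (η : ℕ → ℝ) (hη : ∀ k, 0 < η k)
    (hη1 : ¬ Summable η) (hη2 : Summable (fun k => (η k) ^ 2))
    (y₀ : ℝ) (y : ℕ → Ω → ℝ)
    (hy0 : ∀ ω, y 0 ω = y₀)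
    (hy : ∀ k ω, y (k + 1) ω = y k ω + η k * (I k ω * (y k ω + p) - y k ω)) :
    ∀ᵐ ω ∂P, Tendsto (fun k => y k ω) atTop (nhds Δ) := by
  have hΔp : 0 < Δ + p := add_pos hΔ hp
  set μ := Δ / (Δ + p) with hμ_def
  have hμ : 0 ≤ μ ∧ μ ≤ 1 := ⟨by positivity, (div_le_one hΔp).2 (by linarith)⟩
  have hξ1 : ∀ k ω, |I k ω - μ| ≤ 1 := fun k ω => by
    rcases h01 k ω with h | h <;> rw [h, abs_le] <;> constructor <;> linarith
  have hξ0 : ∀ k, ∫ ω, (I k ω - μ) ∂P = 0 := fun k => by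
    have hI : Integrable (I k) P := Integrable.of_bound (hmeas k).aestronglyMeasurable 1
      (ae_of_all _ fun ω => by rcases h01 k ω with h | h <;> simp [h])
    rw [integral_sub hI (integrable_const μ), integral_const, probReal_univ, one_smul,
      integral_eq_measureReal_of_eq_zero_or_one (hmeas k) (h01 k), measureReal_def, hP k,
      ENNReal.toReal_ofReal (by positivity), sub_self]
  have hξ := (hindep.comp (fun _ x => x - μ) fun _ => measurable_id.sub_const μ)
    |>.isBoundedInnovation (fun k => (hmeas k).sub_const μ) hξ1 hξ0
  have hrec : ∀ k ω, y (k + 1) ω - Δ = (1 - p / (Δ + p) * η k) * (y k ω - Δ)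
      + η k * (y k ω - Δ + (Δ + p)) * (I k ω - μ) := fun k ω => by
    rw [hy k ω, hμ_def]
    field_simp
    ring
  have hy0' : (fun ω => y 0 ω - Δ) = fun _ => y₀ - Δ := funext fun ω => by rw [hy0]
  filter_upwards [hξ.ae_tendsto_zero_of_recursion (e := fun k ω => y k ω - Δ) (by positivity)
    ((div_le_one hΔp).2 (by linarith)) (fun k => (hη k).le) hη1 hη2
    (hy0' ▸ stronglyMeasurable_const) (hy0' ▸ memLp_const _) hrec] with ω hω
  simpa using hω.add_const Δ
end
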